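/- (Uncrossing) The LP maximizing Σ_S γ_S subject to Σ_{S cuts t,t'} γ_S ≤ D(t,t') for all pairs t,t' ∈ T and γ_S ≥ 0, where D is any pseudometric-type bound, has an optimal solution γ* whose support is a laminar family. -/

import Mathlib

open Finset
open scoped Classical

def cutsPair {T : Type*} (S : Finset T) (t t' : T) : Prop :=
  (t ∈ S ∧ t' ∉ S) ∨ (t' ∈ S ∧ t ∉ S)

noncomputable def properSubsets (T : Type*) [Fintype T] : Finset (Finset T) :=
  Finset.univ.filter fun S : Finset T => S.Nonempty ∧ S ≠ Finset.univ

/-- Feasibility for the LP: `γ ≥ 0` is supported on proper nonempty subsets of `T`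
and satisfies `Σ_{S cuts t,t'} γ_S ≤ D(t,t')` for every pair `t,t'`. -/
def LPFeasible {T : Type*} [Fintype T] (D : T → T → ℝ) (γ : Finset T → ℝ) : Prop :=
  (∀ S, 0 ≤ γ S) ∧ (∀ S, γ S ≠ 0 → S.Nonempty ∧ S ≠ Finset.univ) ∧
    ∀ t t', (∑ S ∈ (properSubsets T).filter (fun S => cutsPair S t t'), γ S) ≤ D t t'

/-!
Among the optimal solutions, which form a compact set, take one minimising `∑ γ_S |S|`. If two
sets `S`, `S'` of its support cross, moving the weight `ε = min γ_S γ_S'` from `S` and `S'` to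
`S \ S'` and `S' \ S` keeps the objective and feasibility (every pair cut by `S \ S'` or by
`S' \ S` is cut at least as often by `S` or `S'`), but lowers `∑ γ_S |S|` by `2ε |S ∩ S'|`.
-/

theorem IsCompact.exists_isMaxOn_isMinOn {α β : Type*} [TopologicalSpace α] [TopologicalSpace β]
    [LinearOrder β] [OrderClosedTopology β] {K : Set α} (hK : IsCompact K) (hne : K.Nonempty)
    {f g : α → β} (hf : Continuous f) (hg : ContinuousOn g K) :
    ∃ x ∈ K, IsMaxOn f K x ∧ IsMinOn g {y ∈ K | f x ≤ f y} x := by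
  obtain ⟨x₀, hx₀, hmax⟩ := hK.exists_isMaxOn hne hf.continuousOn
  have hK' : IsCompact {y ∈ K | f x₀ ≤ f y} := hK.inter_right (isClosed_le continuous_const hf)
  obtain ⟨x, ⟨hxK, hx⟩, hmin⟩ := hK'.exists_isMinOn ⟨x₀, hx₀, le_rfl⟩ (hg.mono fun y hy => hy.1)
  exact ⟨x, hxK, fun y hy => (hmax hy).trans hx,
    hmin.on_subset fun y hy => ⟨hy.1, hx.trans hy.2⟩⟩

theorem card_sdiff_add_card_sdiff_lt {α : Type*} [DecidableEq α] {S S' : Finset α}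
    (h : ¬Disjoint S S') :
    #(S \ S') + #(S' \ S) < #S + #S' := by
  have hinter : 0 < #(S ∩ S') := card_pos.2 (not_disjoint_iff_nonempty_inter.1 h)
  have h₁ := card_sdiff_add_card_inter S S'
  have h₂ := card_sdiff_add_card_inter S' S
  rw [inter_comm] at h₂
  omega

section Uncrossing

variable {T : Type*}

theorem ite_cutsPair_sdiff_add_le (S S' : Finset T) (t t' : T) :
    (if cutsPair (S \ S') t t' then 1 else 0 : ℝ) + (if cutsPair (S' \ S) t t' then 1 else 0) ≤
      (if cutsPair S t t' then 1 else 0) + (if cutsPair S' t t' then 1 else 0) := by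
  by_cases h1 : t ∈ S <;> by_cases h2 : t ∈ S' <;> by_cases h3 : t' ∈ S <;>
    by_cases h4 : t' ∈ S' <;> simp [cutsPair, h1, h2, h3, h4]

noncomputable def uncross (γ : Finset T → ℝ) (S S' : Finset T) (ε : ℝ) : Finset T → ℝ :=
  γ + ε • (Pi.single (S \ S') 1 + Pi.single (S' \ S) 1 - Pi.single S 1 - Pi.single S' 1)

theorem sum_mul_uncross (γ w : Finset T → ℝ) {S S' : Finset T} (ε : ℝ)
    {F : Finset (Finset T)} (hS : S ∈ F) (hS' : S' ∈ F) (hSS' : S \ S' ∈ F)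
    (hS'S : S' \ S ∈ F) :
    ∑ X ∈ F, w X * uncross γ S S' ε X =
      ∑ X ∈ F, w X * γ X + ε * (w (S \ S') + w (S' \ S) - w S - w S') := by
  simp [uncross, Pi.single_apply, mul_add, mul_sub, sum_add_distrib, sum_sub_distrib,
    hS, hS', hSS', hS'S]
  ring

variable [Fintype T]

theorem mem_properSubsets {S : Finset T} : S ∈ properSubsets T ↔ S.Nonempty ∧ S ≠ univ := by
  simp [properSubsets]

theorem sdiff_mem_properSubsets {S S' : Finset T} (hS : S ∈ properSubsets T) (h : ¬S ⊆ S') :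
    S \ S' ∈ properSubsets T := by
  rw [mem_properSubsets] at hS ⊢
  refine ⟨sdiff_nonempty.2 h, fun huniv => hS.2 (univ_subset_iff.1 ?_)⟩
  exact huniv ▸ sdiff_subset

theorem sum_filter_cutsPair_eq (γ : Finset T → ℝ) (t t' : T) :
    ∑ S ∈ (properSubsets T).filter (fun S => cutsPair S t t'), γ S =
      ∑ S ∈ properSubsets T, (if cutsPair S t t' then 1 else 0) * γ S := by
  simp only [sum_filter, boole_mul]

theorem lpFeasible_zero {D : T → T → ℝ} (hD : ∀ t t', 0 ≤ D t t') : LPFeasible D 0 :=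
  ⟨fun _ => le_rfl, fun _ h => absurd rfl h, fun t t' => by simpa using hD t t'⟩

theorem LPFeasible.le_sum_abs {D : T → T → ℝ} {γ : Finset T → ℝ} (h : LPFeasible D γ)
    (S : Finset T) : γ S ≤ ∑ t, ∑ t', |D t t'| := by
  by_cases hγS : γ S = 0
  · rw [hγS]; positivity
  obtain ⟨⟨t, ht⟩, hS⟩ := h.2.1 S hγS
  obtain ⟨t', ht'⟩ : ∃ t', t' ∉ S := by simpa [eq_univ_iff_forall] using hS
  have hmem : S ∈ (properSubsets T).filter (fun S => cutsPair S t t') :=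
    mem_filter.2 ⟨mem_properSubsets.2 ⟨⟨t, ht⟩, hS⟩, Or.inl ⟨ht, ht'⟩⟩
  calc γ S ≤ ∑ X ∈ (properSubsets T).filter (fun S => cutsPair S t t'), γ X :=
        single_le_sum (fun X _ => h.1 X) hmem
    _ ≤ D t t' := h.2.2 t t'
    _ ≤ |D t t'| := le_abs_self _
    _ ≤ ∑ t'', |D t t''| :=
        single_le_sum (f := fun t'' => |D t t''|) (fun _ _ => abs_nonneg _) (mem_univ t')
    _ ≤ ∑ t'', ∑ t''', |D t'' t'''| :=
        single_le_sum (f := fun t'' => ∑ t''', |D t'' t'''|)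
          (fun _ _ => sum_nonneg fun _ _ => abs_nonneg _) (mem_univ t)

theorem isClosed_setOf_lpFeasible (D : T → T → ℝ) : IsClosed {γ | LPFeasible D γ} := by
  simp only [LPFeasible, Set.ofPred_and, Set.ofPred_forall]
  refine .inter (isClosed_iInter fun S => isClosed_le continuous_const (continuous_apply S))
    (.inter (isClosed_iInter fun S => ?_) (isClosed_iInter fun t => isClosed_iInter fun t' =>
      isClosed_le (by fun_prop) continuous_const))
  by_cases hS : S.Nonempty ∧ S ≠ univ
  · simp [hS]
  · simpa [hS] using isClosed_eq (continuous_apply S) continuous_const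

theorem isCompact_setOf_lpFeasible (D : T → T → ℝ) : IsCompact {γ | LPFeasible D γ} :=
  isCompact_Icc.of_isClosed_subset (isClosed_setOf_lpFeasible D) fun _ h =>
    ⟨h.1, h.le_sum_abs⟩

theorem lpFeasible_uncross {D : T → T → ℝ} {γ : Finset T → ℝ} (h : LPFeasible D γ)
    {S S' : Finset T} {ε : ℝ} (hS : S ∈ properSubsets T) (hS' : S' ∈ properSubsets T)
    (hSS' : S \ S' ∈ properSubsets T) (hS'S : S' \ S ∈ properSubsets T) (hne : S ≠ S')
    (hε : 0 ≤ ε) (hεS : ε ≤ γ S) (hεS' : ε ≤ γ S') :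
    LPFeasible D (uncross γ S S' ε) := by
  refine ⟨fun X => ?_, fun X hX => ?_, fun t t' => ?_⟩
  · have hγX := h.1 X
    simp only [uncross, Pi.add_apply, Pi.smul_apply, Pi.sub_apply, Pi.single_apply,
      smul_eq_mul]
    split_ifs <;> subst_vars <;> first | exact absurd rfl hne | nlinarith
  · rw [← mem_properSubsets]
    by_contra hX'
    have hγX : γ X = 0 := by_contra fun h0 => hX' (mem_properSubsets.2 (h.2.1 X h0))
    have hXne : ∀ {A}, A ∈ properSubsets T → X ≠ A := fun hA e => hX' (e ▸ hA)
    apply hX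
    simp [uncross, hγX, hXne hS, hXne hS', hXne hSS', hXne hS'S]
  · rw [sum_filter_cutsPair_eq, sum_mul_uncross _ _ _ hS hS' hSS' hS'S,
      ← sum_filter_cutsPair_eq]
    have hcut := ite_cutsPair_sdiff_add_le S S' t t'
    nlinarith [h.2.2 t t']

theorem LPFeasible.exists_uncross {D : T → T → ℝ} {γ : Finset T → ℝ} (h : LPFeasible D γ)
    {S S' : Finset T} (hS : γ S ≠ 0) (hS' : γ S' ≠ 0)
    (hcross : ¬(S ⊆ S' ∨ S' ⊆ S ∨ Disjoint S S')) :
    ∃ γ', LPFeasible D γ' ∧ ∑ X ∈ properSubsets T, γ' X = ∑ X ∈ properSubsets T, γ X ∧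
      ∑ X ∈ properSubsets T, (#X : ℝ) * γ' X < ∑ X ∈ properSubsets T, (#X : ℝ) * γ X := by
  simp only [not_or] at hcross
  obtain ⟨hnsub, hnsub', hndisj⟩ := hcross
  have hmem : ∀ {A}, γ A ≠ 0 → A ∈ properSubsets T := fun hA => mem_properSubsets.2 (h.2.1 _ hA)
  have hSP := hmem hS
  have hS'P := hmem hS'
  have hSS' := sdiff_mem_properSubsets hSP hnsub
  have hS'S := sdiff_mem_properSubsets hS'P hnsub'
  set ε := min (γ S) (γ S')
  have hε : 0 < ε := lt_min ((h.1 S).lt_of_ne' hS) ((h.1 S').lt_of_ne' hS')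
  refine ⟨uncross γ S S' ε, lpFeasible_uncross h hSP hS'P hSS' hS'S (ne_of_not_subset hnsub)
    hε.le (min_le_left _ _) (min_le_right _ _), ?_, ?_⟩
  · simpa using sum_mul_uncross γ 1 ε hSP hS'P hSS' hS'S
  · have hcard : (#(S \ S') : ℝ) + #(S' \ S) < #S + #S' := by
      exact_mod_cast card_sdiff_add_card_sdiff_lt hndisj
    rw [sum_mul_uncross _ _ _ hSP hS'P hSS' hS'S]
    nlinarith

end Uncrossing

/-- (Uncrossing) The LP maximizing `Σ_S γ_S` subject to
`Σ_{S cuts t,t'} γ_S ≤ D(t,t')` and `γ ≥ 0` has an optimal solution whose support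
is a laminar family. -/
theorem lp_optimal_laminar {T : Type} [Fintype T] (D : T → T → ℝ)
    (hD : ∀ t t', 0 ≤ D t t') :
    ∃ γstar : Finset T → ℝ, LPFeasible D γstar ∧
      (∀ S S', γstar S ≠ 0 → γstar S' ≠ 0 → S ⊆ S' ∨ S' ⊆ S ∨ Disjoint S S') ∧
      ∀ γ : Finset T → ℝ, LPFeasible D γ →
        ∑ S ∈ properSubsets T, γ S ≤ ∑ S ∈ properSubsets T, γstar S := by
  obtain ⟨γ, hγ, hmax, hmin⟩ := (isCompact_setOf_lpFeasible D).exists_isMaxOn_isMinOn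
    ⟨0, lpFeasible_zero hD⟩ (f := fun γ => ∑ S ∈ properSubsets T, γ S)
    (g := fun γ => ∑ S ∈ properSubsets T, (#S : ℝ) * γ S) (by fun_prop) (by fun_prop)
  refine ⟨γ, hγ, fun S S' hS hS' => ?_, fun γ' hγ' => hmax hγ'⟩
  by_contra hcross
  obtain ⟨γ', hγ', hsum, hsize⟩ := hγ.exists_uncross hS hS' hcross
  exact hsize.not_ge (hmin ⟨hγ', hsum.ge⟩)
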